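/- arXiv:2110.15547 — 5 statements merged into one kernel-verified Lean document; each statement's English description precedes it below -/
import Mathlib

section
/- Let λ > 0, α > 0, η ∈ [0,1], and let P be the 2×2 matrix with rows (1 − αλ + η, −η) and (1, 0). If (1 − √(αλ))² ≤ η ≤ (1 + √(αλ))², then (αλ − 1 − η)² − 4η ≤ 0, the eigenvalues of P are complex conjugates, and the spectral radius of P equals √η. -/
/-!
The eigenvalues of `P` are the roots of `μ² - (1 - αλ + η) μ + η`, a quadratic with real
coefficients whose discriminant factors as `(η - (1 - √(αλ))²) (η - (1 + √(αλ))²)`, hence is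
nonpositive under the hypothesis. Its roots are then either a conjugate pair or a double real
root, and in both cases `|μ|² = η`, the constant coefficient.
-/

open Matrix Polynomial ComplexConjugate

theorem Matrix.mem_spectrum_fin_two_iff {K : Type*} [Field K] (A : Matrix (Fin 2) (Fin 2) K)
    (μ : K) : μ ∈ spectrum K A ↔ μ ^ 2 - A.trace * μ + A.det = 0 := by
  simp [mem_spectrum_iff_isRoot_charpoly, charpoly_fin_two]

theorem Matrix.conj_mem_spectrum_of_map_conj_eq {n : Type*} [Fintype n] [DecidableEq n]
    {A : Matrix n n ℂ} (hA : A.map conj = A) {μ : ℂ} (hμ : μ ∈ spectrum ℂ A) :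
    conj μ ∈ spectrum ℂ A := by
  rw [mem_spectrum_iff_isRoot_charpoly] at hμ ⊢
  rw [← hA, charpoly_map, IsRoot, eval_map_apply, hμ.eq_zero, map_zero]

theorem Complex.normSq_eq_of_sq_sub_mul_add_eq_zero {b c : ℝ} {μ : ℂ}
    (hdisc : b ^ 2 - 4 * c ≤ 0) (h : μ ^ 2 - b * μ + c = 0) : normSq μ = c := by
  have hre := congrArg re h
  have him := congrArg im h
  simp only [sub_re, add_re, pow_two, mul_re, ofReal_re, ofReal_im, sub_im, add_im, mul_im,
    zero_re, zero_im] at hre him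
  rw [normSq_apply]
  -- a real root is forced by the nonpositive discriminant to be the double root `b / 2`
  rcases mul_eq_zero.mp (show μ.im * (2 * μ.re - b) = 0 by linarith) with him0 | hre_half
  · have hsq : (2 * μ.re - b) ^ 2 = b ^ 2 - 4 * c := by nlinarith
    have hre_half : 2 * μ.re - b = 0 := by nlinarith [sq_nonneg (2 * μ.re - b)]
    nlinarith
  · linear_combination -hre + μ.re * hre_half

theorem heavyBall_discriminant_nonpos {a η : ℝ} (ha : 0 ≤ a)
    (h1 : (1 - √a) ^ 2 ≤ η) (h2 : η ≤ (1 + √a) ^ 2) : (a - 1 - η) ^ 2 - 4 * η ≤ 0 := by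
  have hfactor : (a - 1 - η) ^ 2 - 4 * η = (η - (1 - √a) ^ 2) * (η - (1 + √a) ^ 2) := by
    linear_combination (2 * (1 + η) - a - (√a) ^ 2) * Real.sq_sqrt ha
  rw [hfactor]
  exact mul_nonpos_of_nonneg_of_nonpos (sub_nonneg.mpr h1) (sub_nonpos.mpr h2)

theorem heavyBall_complex_spectralRadius_general (lam alpha eta : ℝ)
    (hlam : 0 < lam) (halpha : 0 < alpha)
    (h1 : (1 - Real.sqrt (alpha * lam)) ^ 2 ≤ eta)
    (h2 : eta ≤ (1 + Real.sqrt (alpha * lam)) ^ 2)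
    (P : Matrix (Fin 2) (Fin 2) ℂ)
    (hP : P = !![((1 - alpha * lam + eta : ℝ) : ℂ), ((-eta : ℝ) : ℂ); 1, 0]) :
    (alpha * lam - 1 - eta) ^ 2 - 4 * eta ≤ 0 ∧
    (∀ μ : ℂ, μ ∈ spectrum ℂ P →
      (starRingEnd ℂ) μ ∈ spectrum ℂ P ∧ ‖μ‖ = Real.sqrt eta) := by
  have hdisc := heavyBall_discriminant_nonpos (mul_pos halpha hlam).le h1 h2
  have hreal : P.map conj = P := by
    subst hP
    ext i j
    fin_cases i <;> fin_cases j <;> simp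
  have htrace : P.trace = ((1 - alpha * lam + eta : ℝ) : ℂ) := by simp [hP, trace_fin_two]
  have hdet : P.det = (eta : ℂ) := by simp [hP, det_fin_two]
  refine ⟨hdisc, fun μ hμ => ⟨conj_mem_spectrum_of_map_conj_eq hreal hμ, ?_⟩⟩
  rw [mem_spectrum_fin_two_iff, htrace, hdet] at hμ
  rw [Complex.norm_def,
    Complex.normSq_eq_of_sq_sub_mul_add_eq_zero (by linear_combination hdisc) hμ]

/-- If `(1 − √(αλ))² ≤ η ≤ (1 + √(αλ))²` with `η ∈ [0,1]`, then the discriminant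
`(αλ − 1 − η)² − 4η` is nonpositive, the eigenvalues of the heavy-ball companion
matrix `P` come in complex-conjugate pairs, and every eigenvalue has modulus `√η`,
i.e. the spectral radius of `P` equals `√η`. -/
theorem heavyBall_complex_spectralRadius (lam alpha eta : ℝ)
    (hlam : 0 < lam) (halpha : 0 < alpha) (heta0 : 0 ≤ eta) (heta1 : eta ≤ 1)
    (h1 : (1 - Real.sqrt (alpha * lam)) ^ 2 ≤ eta)
    (h2 : eta ≤ (1 + Real.sqrt (alpha * lam)) ^ 2)
    (P : Matrix (Fin 2) (Fin 2) ℂ)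
    (hP : P = !![((1 - alpha * lam + eta : ℝ) : ℂ), ((-eta : ℝ) : ℂ); 1, 0]) :
    (alpha * lam - 1 - eta) ^ 2 - 4 * eta ≤ 0 ∧
    (∀ μ : ℂ, μ ∈ spectrum ℂ P →
      (starRingEnd ℂ) μ ∈ spectrum ℂ P ∧ ‖μ‖ = Real.sqrt eta) :=
  heavyBall_complex_spectralRadius_general lam alpha eta hlam halpha h1 h2 P hP
end

section
/- Let λ > 0, 0 < αλ < 1, and η ∈ [0, (1 − √(αλ))²] so that the eigenvalues μ₊ ≥ μ₋ of the 2×2 matrix P with rows (1 − αλ + η, −η) and (1, 0) are real with |μ±| ≤ 1. Then the function g(η, αλ) = (4(1 − η)/(αλ)) · (1 − μ₊) satisfies g(η, αλ) ≤ 8, where μ₊ = ((1 − αλ + η) + √((1 − αλ + η)² − 4η))/2. -/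
/-!
Write `a = αλ` and let `μ₊ ≥ μ₋` be the roots of `t² - (1 - a + η) t + η`, so that
`μ₊ μ₋ = η` and `(1 - μ₊)(1 - μ₋) = a`. The bound `g ≤ 8` then reads
`(1 - μ₊ μ₋)(1 - μ₊) ≤ 2 (1 - μ₋)(1 - μ₊)`, which holds because
`2(1 - y) - (1 - x y) = (1 - x)² + (x - y)(2 - x) ≥ 0` whenever `y ≤ x ≤ 1`.
-/

open Real

lemma one_sub_mul_le_two_mul_one_sub {x y : ℝ} (hyx : y ≤ x) (hx : x ≤ 1) :
    1 - x * y ≤ 2 * (1 - y) := by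
  nlinarith [sq_nonneg (1 - x), mul_nonneg (sub_nonneg.2 hyx) (by linarith : (0 : ℝ) ≤ 2 - x)]

lemma add_sqrt_discrim_mul_sub_sqrt_discrim {b c : ℝ} (h : 0 ≤ b ^ 2 - 4 * c) :
    (b + √(b ^ 2 - 4 * c)) / 2 * ((b - √(b ^ 2 - 4 * c)) / 2) = c := by
  linear_combination (-1 / 4 : ℝ) * sq_sqrt h

lemma add_sqrt_discrim_div_two_le_one {b c : ℝ} (hb : b ≤ 2) (hc : 0 ≤ 1 - b + c) :
    (b + √(b ^ 2 - 4 * c)) / 2 ≤ 1 := by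
  have : √(b ^ 2 - 4 * c) ≤ 2 - b :=
    sqrt_le_iff.2 ⟨by linarith, by nlinarith⟩
  linarith

/-- The discriminant factors as `(η - (1 - √a)²)(η - (1 + √a)²)`. -/
lemma discrim_heavyBall_nonneg {a η : ℝ} (ha : 0 ≤ a) (hη : η ≤ (1 - √a) ^ 2) :
    0 ≤ (1 - a + η) ^ 2 - 4 * η := by
  have hfactor : (1 - a + η) ^ 2 - 4 * η = (η - (1 - √a) ^ 2) * (η - (1 + √a) ^ 2) := by
    linear_combination (2 * η + 2 - a - √a ^ 2) * sq_sqrt ha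
  rw [hfactor]
  have : (1 - √a) ^ 2 ≤ (1 + √a) ^ 2 := by nlinarith [sqrt_nonneg a]
  exact mul_nonneg_of_nonpos_of_nonpos (by linarith) (by linarith)

theorem g_le_eight_general (lam alpha eta : ℝ)
    (h0 : 0 < alpha * lam)
    (heta1 : eta ≤ (1 - Real.sqrt (alpha * lam)) ^ 2) :
    (4 * (1 - eta) / (alpha * lam)) *
      (1 - ((1 - alpha * lam + eta) +
        Real.sqrt ((1 - alpha * lam + eta) ^ 2 - 4 * eta)) / 2) ≤ 8 := by
  set a := alpha * lam
  have hdiscrim := discrim_heavyBall_nonneg h0.le heta1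
  set μplus := (1 - a + eta + √((1 - a + eta) ^ 2 - 4 * eta)) / 2
  set μminus := (1 - a + eta - √((1 - a + eta) ^ 2 - 4 * eta)) / 2
  have hprod : μplus * μminus = eta := add_sqrt_discrim_mul_sub_sqrt_discrim hdiscrim
  have hplus_le_one : μplus ≤ 1 :=
    add_sqrt_discrim_div_two_le_one (by nlinarith [sqrt_nonneg a, sq_sqrt h0.le]) (by linarith)
  have hminus_le_plus : μminus ≤ μplus := by
    simp only [μplus, μminus]
    linarith [sqrt_nonneg ((1 - a + eta) ^ 2 - 4 * eta)]
  have ha : (1 - μplus) * (1 - μminus) = a := by linear_combination hprod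
  rw [div_mul_eq_mul_div, div_le_iff₀ h0, ← hprod, ← ha]
  calc 4 * (1 - μplus * μminus) * (1 - μplus)
      ≤ 4 * (2 * (1 - μminus)) * (1 - μplus) := by
        gcongr
        exact one_sub_mul_le_two_mul_one_sub hminus_le_plus hplus_le_one
    _ = 8 * ((1 - μplus) * (1 - μminus)) := by ring

/-- With `0 < αλ < 1` and `η ∈ [0, (1 − √(αλ))²]` (so that the eigenvalues of the
heavy-ball companion matrix are real with modulus at most 1), the function
`g(η, αλ) = (4(1 − η)/(αλ)) (1 − μ₊)` with
`μ₊ = ((1 − αλ + η) + √((1 − αλ + η)² − 4η))/2` satisfies `g(η, αλ) ≤ 8`. -/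
theorem g_le_eight (lam alpha eta : ℝ) (hlam : 0 < lam)
    (h0 : 0 < alpha * lam) (h1 : alpha * lam < 1)
    (heta0 : 0 ≤ eta) (heta1 : eta ≤ (1 - Real.sqrt (alpha * lam)) ^ 2) :
    (4 * (1 - eta) / (alpha * lam)) *
      (1 - ((1 - alpha * lam + eta) +
        Real.sqrt ((1 - alpha * lam + eta) ^ 2 - 4 * eta)) / 2) ≤ 8 :=
  g_le_eight_general lam alpha eta h0 heta1
end

section
/- Let λ > 0, αλ < 1, and η ∈ ((1 − √(αλ))², 1] so that the eigenvalues of the 2×2 matrix P with rows (1 − αλ + η, −η) and (1, 0) are complex conjugates μ± with |μ±| = √η. Then (1 − μ₊²)(1 − μ₋²) ≤ 4(1 − μ₊)(1 − μ₋) (as real numbers), and consequently (1 − μ₊²)(1 − μ₋²)(1 − η)(1 − √η)/(αλ)² ≤ 8. -/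
/-!
Writing `t = αλ`, Vieta's relations `μ₊ + μ₋ = 1 - t + η`, `μ₊ μ₋ = η` give
`(1 - μ₊)(1 - μ₋) = t` and `(1 + μ₊)(1 + μ₋) = 2 - t + 2η ≤ 4`, so both products are real and
the first bound is immediate. For the second, with `u = √η` the hypothesis on `η` says
`0 ≤ 1 - u ≤ √t`, hence `(1 - η)(1 - u) = (1 + u)(1 - u)² ≤ 2t`, and
`t (2 - t + 2η) (1 - η)(1 - u) ≤ t · 4 · 2t = 8t²`.
-/

theorem one_sub_mul_one_sub_eq_of_add_of_mul {R : Type*} [CommRing R] {a b σ π : R}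
    (hsum : a + b = σ) (hprod : a * b = π) : (1 - a) * (1 - b) = 1 - σ + π := by
  rw [← hsum, ← hprod]; ring

theorem one_sub_sq_mul_one_sub_sq_eq_of_add_of_mul {R : Type*} [CommRing R] {a b σ π : R}
    (hsum : a + b = σ) (hprod : a * b = π) :
    (1 - a ^ 2) * (1 - b ^ 2) = (1 - σ + π) * (1 + σ + π) := by
  rw [← hsum, ← hprod]; ring

theorem one_sub_mul_one_sub_sqrt_le_two_mul {t η : ℝ} (ht : 0 ≤ t)
    (hη : (1 - √t) ^ 2 < η) (hη1 : η ≤ 1) : (1 - η) * (1 - √η) ≤ 2 * t := by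
  have hu1 : √η ≤ 1 := Real.sqrt_le_one.mpr hη1
  have hgap : 1 - √η ≤ √t := by
    have := Real.sqrt_le_sqrt hη.le
    rw [Real.sqrt_sq_eq_abs] at this
    linarith [le_abs_self (1 - √t)]
  have hη0 : 0 ≤ η := (sq_nonneg _).trans hη.le
  calc (1 - η) * (1 - √η) = (1 + √η) * (1 - √η) ^ 2 := by
        linear_combination (1 - √η) * Real.sq_sqrt hη0
    _ ≤ 2 * √t ^ 2 := by gcongr; linarith
    _ = 2 * t := by rw [Real.sq_sqrt ht]

theorem complex_case_bound_general (lam alpha eta : ℝ) (mup mum : ℂ)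
    (hlam : 0 < lam) (halpha : 0 < alpha)
    (heta1 : (1 - Real.sqrt (alpha * lam)) ^ 2 < eta) (heta2 : eta ≤ 1)
    (hsum : mup + mum = ((1 - alpha * lam + eta : ℝ) : ℂ))
    (hprod : mup * mum = ((eta : ℝ) : ℂ)) :
    ((1 - mup ^ 2) * (1 - mum ^ 2)).im = 0 ∧
    ((1 - mup ^ 2) * (1 - mum ^ 2)).re ≤ 4 * ((1 - mup) * (1 - mum)).re ∧
    ((1 - mup ^ 2) * (1 - mum ^ 2)).re * (1 - eta) * (1 - Real.sqrt eta) /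
      (alpha * lam) ^ 2 ≤ 8 := by
  set t := alpha * lam
  have ht : 0 < t := mul_pos halpha hlam
  have hminus : (1 - mup) * (1 - mum) = ((t : ℝ) : ℂ) := by
    rw [one_sub_mul_one_sub_eq_of_add_of_mul hsum hprod]; push_cast; ring
  have hsquares : (1 - mup ^ 2) * (1 - mum ^ 2) = ((t * (2 - t + 2 * eta) : ℝ) : ℂ) := by
    rw [one_sub_sq_mul_one_sub_sq_eq_of_add_of_mul hsum hprod]; push_cast; ring
  simp only [hminus, hsquares, Complex.ofReal_re, Complex.ofReal_im]
  have hplus : 2 - t + 2 * eta ≤ 4 := by linarith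
  refine ⟨trivial, by rw [mul_comm 4]; exact mul_le_mul_of_nonneg_left hplus ht.le, ?_⟩
  rw [div_le_iff₀ (by positivity)]
  calc t * (2 - t + 2 * eta) * (1 - eta) * (1 - √eta)
      = t * (2 - t + 2 * eta) * ((1 - eta) * (1 - √eta)) := by ring
    _ ≤ t * 4 * (2 * t) :=
        mul_le_mul (by gcongr) (one_sub_mul_one_sub_sqrt_le_two_mul ht.le heta1 heta2)
          (mul_nonneg (by linarith) (by linarith [Real.sqrt_le_one.mpr heta2])) (by positivity)
    _ = 8 * t ^ 2 := by ring

/-- When the eigenvalues of the heavy-ball companion matrix are complex conjugates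
`μ₊, μ₋` with `μ₊ + μ₋ = 1 − αλ + η`, `μ₊ μ₋ = η` and `|μ±| = √η`, the quantity
`(1 − μ₊²)(1 − μ₋²)` is real and satisfies
`(1 − μ₊²)(1 − μ₋²) ≤ 4(1 − μ₊)(1 − μ₋)`, and consequently
`(1 − μ₊²)(1 − μ₋²)(1 − η)(1 − √η)/(αλ)² ≤ 8`. -/
theorem complex_case_bound (lam alpha eta : ℝ) (mup mum : ℂ)
    (hlam : 0 < lam) (halpha : 0 < alpha) (h1 : alpha * lam < 1)
    (heta1 : (1 - Real.sqrt (alpha * lam)) ^ 2 < eta) (heta2 : eta ≤ 1)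
    (hconj : mum = (starRingEnd ℂ) mup)
    (hsum : mup + mum = ((1 - alpha * lam + eta : ℝ) : ℂ))
    (hprod : mup * mum = ((eta : ℝ) : ℂ))
    (habs : ‖mup‖ = Real.sqrt eta) :
    ((1 - mup ^ 2) * (1 - mum ^ 2)).im = 0 ∧
    ((1 - mup ^ 2) * (1 - mum ^ 2)).re ≤ 4 * ((1 - mup) * (1 - mum)).re ∧
    ((1 - mup ^ 2) * (1 - mum ^ 2)).re * (1 - eta) * (1 - Real.sqrt eta) /
      (alpha * lam) ^ 2 ≤ 8 :=
  complex_case_bound_general lam alpha eta mup mum hlam halpha heta1 heta2 hsum hprod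
end

section
/- Let λ > 0, α > 0 with αλ ≤ 1, and η = (1 − √(αλ)/2)². Then the discriminant Δ = (1 + η − αλ)² − 4η of the characteristic polynomial of the matrix P with rows (1 − αλ + η, −η) and (1, 0) satisfies |Δ| = 4η − (1 + η − αλ)² ≥ (15/16) αλ. -/
/-! Writing `s = √(αλ) ∈ [0, 1]`, so that `η = (1 - s/2)²`, the quantity `4η − (1 + η − αλ)²` is a
polynomial in `s` whose excess over `(15/16) s²` factors as `s² (1 - s) (33 + 9 s) / 16 ≥ 0`. -/

lemma four_mul_sub_sq_sub_eq (s : ℝ) :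
    4 * (1 - s / 2) ^ 2 - (1 + (1 - s / 2) ^ 2 - s ^ 2) ^ 2 - 15 / 16 * s ^ 2
      = s ^ 2 * (1 - s) * (33 + 9 * s) / 16 := by
  ring

lemma le_four_mul_sub_sq {s : ℝ} (hs0 : 0 ≤ s) (hs1 : s ≤ 1) :
    15 / 16 * s ^ 2 ≤ 4 * (1 - s / 2) ^ 2 - (1 + (1 - s / 2) ^ 2 - s ^ 2) ^ 2 := by
  have h : 0 ≤ s ^ 2 * (1 - s) * (33 + 9 * s) / 16 := by
    have : 0 ≤ 1 - s := sub_nonneg.mpr hs1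
    positivity
  linarith [four_mul_sub_sq_sub_eq s]

/-- With `αλ ≤ 1` and `η = (1 − √(αλ)/2)²`, the discriminant
`Δ = (1 + η − αλ)² − 4η` of the heavy-ball characteristic polynomial satisfies
`|Δ| = 4η − (1 + η − αλ)² ≥ (15/16) αλ`. -/
theorem discriminant_lower_bound (lam alpha eta : ℝ)
    (hlam : 0 < lam) (halpha : 0 < alpha) (hal : alpha * lam ≤ 1)
    (heta : eta = (1 - Real.sqrt (alpha * lam) / 2) ^ 2) :
    |(1 + eta - alpha * lam) ^ 2 - 4 * eta| = 4 * eta - (1 + eta - alpha * lam) ^ 2 ∧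
    4 * eta - (1 + eta - alpha * lam) ^ 2 ≥ (15 / 16) * (alpha * lam) := by
  have hal0 : 0 ≤ alpha * lam := (mul_pos halpha hlam).le
  have hbound : 4 * eta - (1 + eta - alpha * lam) ^ 2 ≥ (15 / 16) * (alpha * lam) := by
    have h := le_four_mul_sub_sq (Real.sqrt_nonneg _) (Real.sqrt_le_one.mpr hal)
    rwa [Real.sq_sqrt hal0, ← heta] at h
  refine ⟨?_, hbound⟩
  rw [abs_of_nonpos (by linarith), neg_sub]
end

section
/- Let λ > 0, α > 0 with αλ < 1, and η such that (1 − √(αλ))²/(1 − αλ) ≤ η ≤ (1 + √(αλ))²/(1 − αλ). Then (αλ(1 + η) − 1 − η)² − 4η(1 − αλ) ≤ 0, and each root μ of μ² + μ(αλ(1+η) − 1 − η) + η(1 − αλ) = 0 satisfies |μ| = √(η(1 − αλ)). -/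
/-!
Writing `p = η(1 - αλ)` and `s = √(αλ)`, the discriminant factors as
`(p - (1 - s)²)(p - (1 + s)²)`, which is nonpositive exactly in the stated range of `η`.
A monic real quadratic with nonpositive discriminant has roots `-b/2 ± i√(c - b²/4)`,
all of modulus `√c`.
-/

namespace Complex

variable {b c : ℝ} {μ : ℂ}

theorem re_eq_neg_half_of_quadratic_root (hdisc : b ^ 2 - 4 * c ≤ 0)
    (hμ : μ ^ 2 + μ * (b : ℂ) + (c : ℂ) = 0) : μ.re = -b / 2 := by
  have hre : μ.re ^ 2 - μ.im ^ 2 + μ.re * b + c = 0 := by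
    simpa [sq] using congrArg re hμ
  have him : μ.im * (2 * μ.re + b) = 0 := by
    have := congrArg im hμ
    simp only [add_im, sq, mul_im, ofReal_re, ofReal_im, zero_im] at this
    linarith
  rcases mul_eq_zero.1 him with hreal | hsum
  · -- a real root forces the discriminant `(2 re μ + b)²` to vanish
    have hsq : (2 * μ.re + b) ^ 2 = b ^ 2 - 4 * c := by
      rw [hreal] at hre; linear_combination 4 * hre
    have : 2 * μ.re + b = 0 := pow_eq_zero_iff two_ne_zero |>.1 <|
      le_antisymm (hsq ▸ hdisc) (sq_nonneg _)
    linarith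
  · linarith

theorem norm_eq_sqrt_of_quadratic_root (hdisc : b ^ 2 - 4 * c ≤ 0)
    (hμ : μ ^ 2 + μ * (b : ℂ) + (c : ℂ) = 0) : ‖μ‖ = Real.sqrt c := by
  have hre : μ.re ^ 2 - μ.im ^ 2 + μ.re * b + c = 0 := by
    simpa [sq] using congrArg re hμ
  have hx := re_eq_neg_half_of_quadratic_root hdisc hμ
  have hnormSq : normSq μ = c := by
    rw [hx] at hre
    rw [normSq_apply, hx]
    linear_combination -hre
  rw [norm_def, hnormSq]

end Complex

theorem asg_discriminant_eq (s eta : ℝ) :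
    (s ^ 2 * (1 + eta) - 1 - eta) ^ 2 - 4 * eta * (1 - s ^ 2) =
      (eta * (1 - s ^ 2) - (1 - s) ^ 2) * (eta * (1 - s ^ 2) - (1 + s) ^ 2) := by
  ring

/-- ASG spectral radius computation: if
`(1 − √(αλ))²/(1 − αλ) ≤ η ≤ (1 + √(αλ))²/(1 − αλ)` with `αλ < 1`, then the
discriminant `(αλ(1+η) − 1 − η)² − 4η(1 − αλ)` is nonpositive, and each root `μ`
of `μ² + μ(αλ(1+η) − 1 − η) + η(1 − αλ) = 0` satisfies `|μ| = √(η(1 − αλ))`. -/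
theorem asg_spectral_radius (lam alpha eta : ℝ)
    (hlam : 0 < lam) (halpha : 0 < alpha) (hal : alpha * lam < 1)
    (h1 : (1 - Real.sqrt (alpha * lam)) ^ 2 / (1 - alpha * lam) ≤ eta)
    (h2 : eta ≤ (1 + Real.sqrt (alpha * lam)) ^ 2 / (1 - alpha * lam)) :
    (alpha * lam * (1 + eta) - 1 - eta) ^ 2 - 4 * eta * (1 - alpha * lam) ≤ 0 ∧
    (∀ μ : ℂ, μ ^ 2 + μ * ((alpha * lam * (1 + eta) - 1 - eta : ℝ) : ℂ) +
        ((eta * (1 - alpha * lam) : ℝ) : ℂ) = 0 →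
      ‖μ‖ = Real.sqrt (eta * (1 - alpha * lam))) := by
  have hgap : 0 < 1 - alpha * lam := sub_pos.2 hal
  have hsq : Real.sqrt (alpha * lam) ^ 2 = alpha * lam := Real.sq_sqrt (by positivity)
  have hlower := (div_le_iff₀ hgap).1 h1
  have hupper := (le_div_iff₀ hgap).1 h2
  have hdisc : (alpha * lam * (1 + eta) - 1 - eta) ^ 2 - 4 * eta * (1 - alpha * lam) ≤ 0 := by
    rw [← hsq, asg_discriminant_eq, hsq]
    exact mul_nonpos_of_nonneg_of_nonpos (by linarith) (by linarith)
  exact ⟨hdisc, fun μ hμ => Complex.norm_eq_sqrt_of_quadratic_root (by linarith) hμ⟩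
end
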